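/- If σ, τ ∈ L([n]) are comparable in the weak Bruhat order, i.e., Inv(σ) ⊆ Inv(τ), then the set-system Id(σ) ∪ Id(τ) is separated. -/

import Mathlib

/-- The set of linear orders on `{1,…,n}`, encoded as words (lists) listing the
alternatives from worst to best; such a word is a permutation of `1,2,…,n`. -/
def LinWords (n : ℕ) : Set (List ℕ) := {l | l.Perm (List.range' 1 n)}

/-- Linear orders on a finite ground set `X ⊆ ℕ`, encoded as words. -/
def LinWordsOn (X : Finset ℕ) : Set (List ℕ) := {l | l.Perm (X.sort (· ≤ ·))}

/-- `ltIn σ i j` : `i` occurs before (i.e. is worse than) `j` in the word `σ`;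
this is the relation `i <_σ j`. -/
def ltIn (σ : List ℕ) (i j : ℕ) : Prop := σ.idxOf i < σ.idxOf j

instance (σ : List ℕ) (i j : ℕ) : Decidable (ltIn σ i j) :=
  inferInstanceAs (Decidable (σ.idxOf i < σ.idxOf j))

/-- Three orders in `D` whose restrictions to `{i,j,k}` are exactly the three
cyclic patterns `i<j<k`, `j<k<i`, `k<i<j`. -/
def CyclicTriple (D : Set (List ℕ)) (i j k : ℕ) : Prop :=
  ∃ σ₁ ∈ D, ∃ σ₂ ∈ D, ∃ σ₃ ∈ D,
    (ltIn σ₁ i j ∧ ltIn σ₁ j k) ∧ (ltIn σ₂ j k ∧ ltIn σ₂ k i) ∧ (ltIn σ₃ k i ∧ ltIn σ₃ i j)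

/-- `D` is cyclic: some three distinct alternatives and three orders of `D`
restrict to `{i,j,k}` as `{ijk, jki, kij}` or as `{kji, jik, ikj}`. -/
def IsCyclicDom (D : Set (List ℕ)) : Prop :=
  ∃ i j k : ℕ, i ≠ j ∧ j ≠ k ∧ i ≠ k ∧ (CyclicTriple D i j k ∨ CyclicTriple D k j i)

/-- On the triple `i<j<k`, in every order of `D` the alternative `j` is never the worst. -/
def PeakCond (D : Set (List ℕ)) (i j k : ℕ) : Prop :=
  ∀ σ ∈ D, ¬ (ltIn σ j i ∧ ltIn σ j k)

/-- On the triple `i<j<k`, in every order of `D` the alternative `j` is never the best. -/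
def PitCond (D : Set (List ℕ)) (i j k : ℕ) : Prop :=
  ∀ σ ∈ D, ¬ (ltIn σ i j ∧ ltIn σ k j)

/-- `D` is a peak-pit domain: every triple `i<j<k` in `[n]` satisfies the peak
condition or the pit condition. -/
def IsPeakPit (n : ℕ) (D : Set (List ℕ)) : Prop :=
  ∀ i j k : ℕ, 1 ≤ i → i < j → j < k → k ≤ n → (PeakCond D i j k ∨ PitCond D i j k)

/-- The four symbols a casting can assign to a triple. -/
inductive Symb | peak | pit | right | left

/-- Membership of (the restriction of) `σ` in the four-element domain `D₃(s)` on
the triple `i<j<k`: for `∩`, `j` is not worst; for `∪`, `j` is not best; for `→`,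
`k` is not middle; for `←`, `i` is not middle. -/
def TripleCond : Symb → List ℕ → ℕ → ℕ → ℕ → Prop
  | Symb.peak, σ, i, j, k => ¬ (ltIn σ j i ∧ ltIn σ j k)
  | Symb.pit,  σ, i, j, k => ¬ (ltIn σ i j ∧ ltIn σ k j)
  | Symb.right, σ, i, j, k => ¬ ((ltIn σ i k ∧ ltIn σ k j) ∨ (ltIn σ j k ∧ ltIn σ k i))
  | Symb.left,  σ, i, j, k => ¬ ((ltIn σ j i ∧ ltIn σ i k) ∨ (ltIn σ k i ∧ ltIn σ i j))

/-- The domain `D(c)` of a casting `c`: all linear orders on `[n]` whose restriction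
to every triple `i<j<k` lies in `D₃(c i j k)`. -/
def CastDomain (n : ℕ) (c : ℕ → ℕ → ℕ → Symb) : Set (List ℕ) :=
  {σ | σ ∈ LinWords n ∧ ∀ i j k : ℕ, 1 ≤ i → i < j → j < k → k ≤ n → TripleCond (c i j k) σ i j k}

/-- The set of inversions of a word `σ`: pairs `(i,j)` of alternatives of `σ`
with `i < j` as integers and `j <_σ i`. -/
def InvPairs (σ : List ℕ) : Set (ℕ × ℕ) :=
  {p | p.1 ∈ σ ∧ p.2 ∈ σ ∧ p.1 < p.2 ∧ ltIn σ p.2 p.1}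

/-- `τ` covers `σ` in the weak Bruhat order: `InvPairs τ` is `InvPairs σ` plus exactly one pair. -/
def Covers (τ σ : List ℕ) : Prop :=
  ∃ p : ℕ × ℕ, p ∉ InvPairs σ ∧ InvPairs τ = insert p (InvPairs σ)

/-- Adjacency in the Bruhat graph. -/
def BruhatAdj (σ τ : List ℕ) : Prop := Covers τ σ ∨ Covers σ τ

/-- A path in the Bruhat graph from `σ` to `τ` all of whose vertices lie in `D`. -/
def PathIn (D : Set (List ℕ)) (σ τ : List ℕ) : Prop :=
  ∃ (m : ℕ) (f : ℕ → List ℕ), f 0 = σ ∧ f m = τ ∧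
    (∀ t ≤ m, f t ∈ D) ∧ ∀ t < m, BruhatAdj (f t) (f (t + 1))

/-- `D` is semi-connected (ground set `[n]`): it contains the increasing order `α`
and the decreasing order `ω` and a Bruhat path from `α` to `ω` inside `D`. -/
def SemiConnected (n : ℕ) (D : Set (List ℕ)) : Prop :=
  List.range' 1 n ∈ D ∧ (List.range' 1 n).reverse ∈ D ∧
    PathIn D (List.range' 1 n) (List.range' 1 n).reverse

/-- `D` is semi-connected on the ground set `X`. -/
def SemiConnectedOn (X : Finset ℕ) (D : Set (List ℕ)) : Prop :=
  X.sort (· ≤ ·) ∈ D ∧ (X.sort (· ≤ ·)).reverse ∈ D ∧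
    PathIn D (X.sort (· ≤ ·)) (X.sort (· ≤ ·)).reverse

/-- `A` is an ideal of the order `σ`: a downward-closed (w.r.t. `<_σ`) set of
alternatives of `σ`, i.e. an initial segment of the word `σ`. -/
def IsIdeal (σ : List ℕ) (A : Set ℕ) : Prop :=
  (∀ x ∈ A, x ∈ σ) ∧ ∀ x ∈ A, ∀ y ∈ σ, ltIn σ y x → y ∈ A

/-- The set system of all ideals of `σ`. -/
def IdSet (σ : List ℕ) : Set (Set ℕ) := {A | IsIdeal σ A}

/-- The convex hull of a set of naturals: the minimal integer interval containing it. -/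
def hull (S : Set ℕ) : Set ℕ := {x | ∃ a ∈ S, ∃ b ∈ S, a ≤ x ∧ x ≤ b}

/-- `A` and `B` are separated: the convex hulls of `A \ B` and `B \ A` are disjoint. -/
def Separated (A B : Set ℕ) : Prop := Disjoint (hull (A \ B)) (hull (B \ A))

/-- A separated set system: any two members are separated. -/
def SepSystem (𝒳 : Set (Set ℕ)) : Prop := ∀ A ∈ 𝒳, ∀ B ∈ 𝒳, Separated A B

/-- The concatenation `σ * τ` of a word on `[n]` with a word on `[n']`, the latter
shifted by `n`. -/
def concatWord (n : ℕ) (σ τ : List ℕ) : List ℕ := σ ++ τ.map (· + n)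

/-- The concatenation `{σ * τ : σ ∈ D, τ ∈ D'}` of two domains. -/
def ConcatDomain (n : ℕ) (D D' : Set (List ℕ)) : Set (List ℕ) :=
  {l | ∃ σ ∈ D, ∃ τ ∈ D', l = concatWord n σ τ}

/-- The simple-majority relation `i sm(ν) j` for an opinion `ν` on the finite domain `D`. -/
def SM (D : Finset (List ℕ)) (ν : List ℕ → ℕ) (i j : ℕ) : Prop :=
  (∑ σ ∈ D, if ltIn σ j i then ν σ else 0) > (∑ σ ∈ D, if ltIn σ i j then ν σ else 0)

/-- Fishburn's domain (the alternating scheme): for each triple `i<j<k`, if `j` is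
even then `j` is not the worst of `{i,j,k}`, and if `j` is odd then `j` is not the best. -/
def Fishburn (n : ℕ) : Set (List ℕ) :=
  {σ | σ ∈ LinWords n ∧ ∀ i j k : ℕ, 1 ≤ i → i < j → j < k → k ≤ n →
    (Even j → ¬ (ltIn σ j i ∧ ltIn σ j k)) ∧ (Odd j → ¬ (ltIn σ i j ∧ ltIn σ k j))}

/-- `γ n`: the maximum cardinality of a peak-pit domain in `L([n])`. -/
noncomputable def gamma (n : ℕ) : ℕ :=
  sSup {m | ∃ D : Set (List ℕ), D ⊆ LinWords n ∧ IsPeakPit n D ∧ D.ncard = m}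

/-
If `A` is an ideal of `σ` and `B` an ideal of `τ`, then every `a ∈ A \ B` lies below every
`b ∈ B \ A` in `σ` and above it in `τ`. Were `a > b`, the pair `(b, a)` would be an inversion of
`σ` but not of `τ`; hence `a < b`, so `A \ B` lies entirely to the left of `B \ A` and their
hulls are disjoint. Taking `τ = σ` covers two ideals of the same order.
-/

lemma ltIn_asymm {σ : List ℕ} {a b : ℕ} (h : ltIn σ a b) : ¬ ltIn σ b a :=
  lt_asymm h

lemma ltIn_or_ltIn {σ : List ℕ} {a b : ℕ} (ha : a ∈ σ) (hne : a ≠ b) :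
    ltIn σ a b ∨ ltIn σ b a :=
  lt_or_gt_of_ne fun h => hne ((List.idxOf_inj ha).mp h)

lemma IsIdeal.ltIn_of_mem_of_notMem {σ : List ℕ} {A : Set ℕ} (hA : IsIdeal σ A) {a b : ℕ}
    (ha : a ∈ A) (hb : b ∈ σ) (hbA : b ∉ A) : ltIn σ a b :=
  (ltIn_or_ltIn (hA.1 a ha) (ne_of_mem_of_not_mem ha hbA)).resolve_right
    fun hba => hbA (hA.2 a ha b hb hba)

lemma separated_of_forall_lt {A B : Set ℕ} (h : ∀ a ∈ A \ B, ∀ b ∈ B \ A, a < b) :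
    Separated A B := by
  rw [Separated, Set.disjoint_left]
  rintro x ⟨-, -, a, ha, -, hxa⟩ ⟨b, hb, -, -, hbx, -⟩
  exact (h a ha b hb).not_ge (hbx.trans hxa)

lemma IsIdeal.lt_of_invPairs_subset {σ τ : List ℕ} {A B : Set ℕ} (hστ : σ.Perm τ)
    (h : InvPairs σ ⊆ InvPairs τ) (hA : IsIdeal σ A) (hB : IsIdeal τ B)
    {a b : ℕ} (ha : a ∈ A \ B) (hb : b ∈ B \ A) : a < b := by
  have haσ : a ∈ σ := hA.1 a ha.1
  have hbσ : b ∈ σ := hστ.mem_iff.mpr (hB.1 b hb.1)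
  have hab : ltIn σ a b := hA.ltIn_of_mem_of_notMem ha.1 hbσ hb.2
  have hba : ltIn τ b a := hB.ltIn_of_mem_of_notMem hb.1 (hστ.mem_iff.mp haσ) ha.2
  rcases lt_trichotomy a b with hlt | rfl | hgt
  · exact hlt
  · exact absurd ha.1 hb.2
  · have hinv : (b, a) ∈ InvPairs τ := h ⟨hbσ, haσ, hgt, hab⟩
    exact (ltIn_asymm hba hinv.2.2.2).elim

lemma IsIdeal.separated_of_invPairs_subset {σ τ : List ℕ} {A B : Set ℕ} (hστ : σ.Perm τ)
    (h : InvPairs σ ⊆ InvPairs τ) (hA : IsIdeal σ A) (hB : IsIdeal τ B) : Separated A B :=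
  separated_of_forall_lt fun _ ha _ hb => hA.lt_of_invPairs_subset hστ h hB ha hb

/-- if `σ, τ ∈ L([n])` are comparable in the weak Bruhat order,
i.e. `Inv σ ⊆ Inv τ`, then `Id(σ) ∪ Id(τ)` is separated. -/
theorem statement_10 (n : ℕ) (σ τ : List ℕ) (hσ : σ ∈ LinWords n) (hτ : τ ∈ LinWords n)
    (h : InvPairs σ ⊆ InvPairs τ) :
    SepSystem (IdSet σ ∪ IdSet τ) := by
  have hστ : σ.Perm τ := hσ.trans hτ.symm
  rintro A (hA | hA) B (hB | hB)
  · exact IsIdeal.separated_of_invPairs_subset (.refl σ) subset_rfl hA hB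
  · exact hA.separated_of_invPairs_subset hστ h hB
  · exact (hB.separated_of_invPairs_subset hστ h hA).symm
  · exact IsIdeal.separated_of_invPairs_subset (.refl τ) subset_rfl hA hB
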